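/- arXiv:2305.02004 — 6 statements merged into one kernel-verified Lean document; each statement's English description precedes it below -/
import Mathlib

section
/- There exists a Lorentzian metric space (X,σ,τ) with a pre-order ≤ containing ≪ such that the push-up property holds but the reverse triangle inequality for ≤ fails. Concretely: let X = {x,y,z} with the discrete topology, τ(x,z) = 1, τ(y,z) = 2, τ = 0 on all other pairs, and ≤ the pre-order generated by x ≤ y ≤ z. Then push-up holds, yet τ(x,z) < τ(x,y) + τ(y,z) with x ≤ y ≤ z. -/
open Filter Topology Set ENNReal

theorem stmt3 :
    ∃ (τ : Fin 3 → Fin 3 → ℝ≥0∞) (le : Fin 3 → Fin 3 → Prop),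
      -- (Fin 3 carries the discrete topology)
      DiscreteTopology (Fin 3) ∧
      -- (X, τ) is a Lorentzian metric space
      LowerSemicontinuous (fun p : Fin 3 × Fin 3 => τ p.1 p.2) ∧
      (∀ x y z, 0 < τ x y → 0 < τ y z → τ x y + τ y z ≤ τ x z) ∧
      -- le is a pre-order containing the chronological relation
      (∀ x, le x x) ∧ (∀ x y z, le x y → le y z → le x z) ∧
      (∀ x y, 0 < τ x y → le x y) ∧
      -- the concrete values: τ(x,z)=1, τ(y,z)=2, zero otherwise,
      -- with x = 0, y = 1, z = 2
      τ 0 2 = 1 ∧ τ 1 2 = 2 ∧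
      (∀ a b : Fin 3, ¬(a = 0 ∧ b = 2) → ¬(a = 1 ∧ b = 2) → τ a b = 0) ∧
      le 0 1 ∧ le 1 2 ∧
      -- the push-up property holds
      (∀ x y z, ((le x y ∧ 0 < τ y z) ∨ (0 < τ x y ∧ le y z)) → 0 < τ x z) ∧
      -- yet the reverse triangle inequality for le fails
      (∃ x y z, le x y ∧ le y z ∧ τ x z < τ x y + τ y z) := by
  refine ⟨fun a b => if a = 0 ∧ b = 2 then 1 else if a = 1 ∧ b = 2 then 2 else 0,
    (· ≤ ·), inferInstance, ?_, ?_, fun x => le_refl x, fun x y z => le_trans, ?_,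
    by norm_num, by norm_num, ?_, by decide, by decide, ?_, ?_⟩
  · intro p c hc
    simp only [nhds_discrete, Filter.eventually_pure]
    exact hc
  · intro x y z hxy hyz
    fin_cases x <;> fin_cases y <;> fin_cases z <;> simp_all
  · intro x y h
    fin_cases x <;> fin_cases y <;> simp_all <;> decide
  · intro a b h1 h2
    fin_cases a <;> fin_cases b <;> simp_all
  · intro x y z h
    fin_cases x <;> fin_cases y <;> fin_cases z <;> simp_all <;> decide
  · exact ⟨0, 1, 2, by decide, by decide, by norm_num [show (1:Fin 3) ≠ 2 by decide]⟩
end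

section
/- The extended Lorentzian distance on the c-completion is well defined: if (qₙ) and (rₙ) are past chains generating the same IF F (i.e. I⁺[(qₙ)] = I⁺[(rₙ)] = F), and (p'ₙ), (s'ₙ) are future chains generating the same IP P' (I⁻[(p'ₙ)] = I⁻[(s'ₙ)] = P'), then limₙ τ(qₙ,p'ₙ) = limₙ τ(rₙ,s'ₙ). -/
/-!
Since `q n ∈ I⁺[q] = I⁺[r]` and `p' n ∈ I⁻[p'] = I⁻[s']`, there are `k, m` with `r k ≪ q n` and
`p' n ≪ s' m`; the reverse triangle inequality then gives
`τ (q n) (p' n) ≤ τ (r k) (s' m) ≤ τ (r N) (s' N)` for all large `N`, so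
`lim τ (q n) (p' n) ≤ lim τ (r n) (s' n)`. Swapping the roles of the chains gives equality.
-/

open Filter Topology Set ENNReal

section

variable {X : Type*}

def ReverseTriangle (τ : X → X → ℝ≥0∞) : Prop :=
  ∀ x y z : X, 0 < τ x y → 0 < τ y z → τ x y + τ y z ≤ τ x z

def chronFuture (τ : X → X → ℝ≥0∞) (q : ℕ → X) : Set X := {z | ∃ n, 0 < τ (q n) z}

def chronPast (τ : X → X → ℝ≥0∞) (p : ℕ → X) : Set X := {z | ∃ n, 0 < τ z (p n)}

namespace ReverseTriangle

variable {τ : X → X → ℝ≥0∞} (h : ReverseTriangle τ)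
include h

theorem le_left {x y z : X} (hxy : 0 < τ x y) (hyz : 0 < τ y z) : τ y z ≤ τ x z :=
  le_add_self.trans (h x y z hxy hyz)

theorem le_right {x y z : X} (hxy : 0 < τ x y) (hyz : 0 < τ y z) : τ x y ≤ τ x z :=
  le_self_add.trans (h x y z hxy hyz)

theorem pos_trans {x y z : X} (hxy : 0 < τ x y) (hyz : 0 < τ y z) : 0 < τ x z :=
  hxy.trans_le (h.le_right hxy hyz)

theorem le_of_pos {a a' b b' : X} (ha : 0 < τ a' a) (hab : 0 < τ a b) (hb : 0 < τ b b') :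
    τ a b ≤ τ a' b' :=
  calc τ a b ≤ τ a' b := h.le_left ha hab
    _ ≤ τ a' b' := h.le_right (h.pos_trans ha hab) hb

theorem pos_of_lt_of_past_chain {r : ℕ → X} (hr : ∀ n, 0 < τ (r (n + 1)) (r n)) {n m : ℕ}
    (hnm : n < m) : 0 < τ (r m) (r n) := by
  induction m, hnm using Nat.le_induction with
  | base => exact hr n
  | succ m _ ih => exact h.pos_trans (hr m) ih

theorem pos_of_lt_of_future_chain {s : ℕ → X} (hs : ∀ n, 0 < τ (s n) (s (n + 1))) {n m : ℕ}
    (hnm : n < m) : 0 < τ (s n) (s m) := by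
  induction m, hnm using Nat.le_induction with
  | base => exact hs n
  | succ m _ ih => exact h.pos_trans ih (hs m)

theorem eventually_le_of_chains {r s : ℕ → X} (hr : ∀ n, 0 < τ (r (n + 1)) (r n))
    (hs : ∀ n, 0 < τ (s n) (s (n + 1))) {k m : ℕ} (hkm : 0 < τ (r k) (s m)) :
    ∀ᶠ N in atTop, τ (r k) (s m) ≤ τ (r N) (s N) := by
  filter_upwards [eventually_gt_atTop (max k m)] with N hN
  exact h.le_of_pos (h.pos_of_lt_of_past_chain hr (max_lt_iff.mp hN).1)
    hkm (h.pos_of_lt_of_future_chain hs (max_lt_iff.mp hN).2)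

theorem limit_le_of_subset {q r p s : ℕ → X} (hq : ∀ n, 0 < τ (q (n + 1)) (q n))
    (hr : ∀ n, 0 < τ (r (n + 1)) (r n)) (hp : ∀ n, 0 < τ (p n) (p (n + 1)))
    (hs : ∀ n, 0 < τ (s n) (s (n + 1))) (hF : chronFuture τ q ⊆ chronFuture τ r)
    (hP : chronPast τ p ⊆ chronPast τ s) {l₁ l₂ : ℝ≥0∞}
    (h₁ : Tendsto (fun n => τ (q n) (p n)) atTop (𝓝 l₁))
    (h₂ : Tendsto (fun n => τ (r n) (s n)) atTop (𝓝 l₂)) :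
    l₁ ≤ l₂ := by
  refine le_of_tendsto' h₁ fun n => ?_
  rcases (zero_le : 0 ≤ τ (q n) (p n)).eq_or_lt with hzero | hpos
  · exact hzero ▸ zero_le
  obtain ⟨k, hk⟩ : q n ∈ chronFuture τ r := hF ⟨n + 1, hq n⟩
  obtain ⟨m, hm⟩ : p n ∈ chronPast τ s := hP ⟨n + 1, hp n⟩
  have hle : τ (q n) (p n) ≤ τ (r k) (s m) := h.le_of_pos hk hpos hm
  exact hle.trans (ge_of_tendsto h₂ (h.eventually_le_of_chains hr hs (hpos.trans_le hle)))

end ReverseTriangle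

end

theorem stmt8_general {X : Type*} (τ : X → X → ℝ≥0∞)
    (hrev : ∀ x y z : X, 0 < τ x y → 0 < τ y z → τ x y + τ y z ≤ τ x z)
    (q r p' s' : ℕ → X)
    (hq : ∀ n, 0 < τ (q (n + 1)) (q n)) (hr : ∀ n, 0 < τ (r (n + 1)) (r n))
    (hp : ∀ n, 0 < τ (p' n) (p' (n + 1))) (hs : ∀ n, 0 < τ (s' n) (s' (n + 1)))
    (hF : {z | ∃ n, 0 < τ (q n) z} = {z | ∃ n, 0 < τ (r n) z})
    (hP : {z | ∃ n, 0 < τ z (p' n)} = {z | ∃ n, 0 < τ z (s' n)})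
    (l₁ l₂ : ℝ≥0∞)
    (h₁ : Tendsto (fun n => τ (q n) (p' n)) atTop (𝓝 l₁))
    (h₂ : Tendsto (fun n => τ (r n) (s' n)) atTop (𝓝 l₂)) :
    l₁ = l₂ := by
  have h : ReverseTriangle τ := hrev
  exact le_antisymm (h.limit_le_of_subset hq hr hp hs hF.subset hP.subset h₁ h₂)
    (h.limit_le_of_subset hr hq hs hp hF.symm.subset hP.symm.subset h₂ h₁)

theorem stmt8 {X : Type*} [TopologicalSpace X] (τ : X → X → ℝ≥0∞)
    (hlsc : LowerSemicontinuous fun p : X × X => τ p.1 p.2)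
    (hrev : ∀ x y z : X, 0 < τ x y → 0 < τ y z → τ x y + τ y z ≤ τ x z)
    (q r p' s' : ℕ → X)
    (hq : ∀ n, 0 < τ (q (n + 1)) (q n)) (hr : ∀ n, 0 < τ (r (n + 1)) (r n))
    (hp : ∀ n, 0 < τ (p' n) (p' (n + 1))) (hs : ∀ n, 0 < τ (s' n) (s' (n + 1)))
    (hF : {z | ∃ n, 0 < τ (q n) z} = {z | ∃ n, 0 < τ (r n) z})
    (hP : {z | ∃ n, 0 < τ z (p' n)} = {z | ∃ n, 0 < τ z (s' n)})
    (l₁ l₂ : ℝ≥0∞)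
    (h₁ : Tendsto (fun n => τ (q n) (p' n)) atTop (𝓝 l₁))
    (h₂ : Tendsto (fun n => τ (r n) (s' n)) atTop (𝓝 l₂)) :
    l₁ = l₂ :=
  stmt8_general τ hrev q r p' s' hq hr hp hs hF hP l₁ l₂ h₁ h₂
end

section
/- Let (qₙ) be a past chain generating F and (p'ₙ) a future chain generating P' in a Lorentzian metric space. Then limₙ τ(qₙ,p'ₙ) > 0 if and only if F ∩ P' ≠ ∅, where F = I⁺[(qₙ)] and P' = I⁻[(p'ₙ)]. -/
open Filter Topology Set ENNReal

theorem stmt9 {X : Type*} [TopologicalSpace X] (τ : X → X → ℝ≥0∞)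
    (hlsc : LowerSemicontinuous fun p : X × X => τ p.1 p.2)
    (hrev : ∀ x y z : X, 0 < τ x y → 0 < τ y z → τ x y + τ y z ≤ τ x z)
    (q p' : ℕ → X)
    (hq : ∀ n, 0 < τ (q (n + 1)) (q n))
    (hp : ∀ n, 0 < τ (p' n) (p' (n + 1)))
    (l : ℝ≥0∞) (hl : Tendsto (fun n => τ (q n) (p' n)) atTop (𝓝 l)) :
    0 < l ↔ ({z | ∃ n, 0 < τ (q n) z} ∩ {z | ∃ n, 0 < τ z (p' n)}).Nonempty := by
  have hqchain : ∀ m n : ℕ, m < n → 0 < τ (q n) (q m) := by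
    intro m n hmn
    induction n with
    | zero => omega
    | succ k ih =>
      rcases Nat.lt_succ_iff_lt_or_eq.mp hmn with h | h
      · have h1 := ih h
        exact ((hq k).trans_le le_self_add).trans_le (hrev _ _ _ (hq k) h1)
      · subst h; exact hq m
  have hpchain : ∀ m n : ℕ, m < n → 0 < τ (p' m) (p' n) := by
    intro m n hmn
    induction n with
    | zero => omega
    | succ k ih =>
      rcases Nat.lt_succ_iff_lt_or_eq.mp hmn with h | h
      · have h1 := ih h
        exact (h1.trans_le le_self_add).trans_le (hrev _ _ _ h1 (hp k))
      · subst h; exact hp m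
  constructor
  · intro hlpos
    have hev : ∀ᶠ n in atTop, 0 < τ (q n) (p' n) :=
      hl.eventually (eventually_gt_nhds hlpos)
    obtain ⟨n, hn⟩ := hev.exists
    exact ⟨p' n, ⟨n, hn⟩, ⟨n + 1, hp n⟩⟩
  · rintro ⟨z, ⟨m, hm⟩, ⟨k, hk⟩⟩
    set N := max m k + 1
    have hNm : m < N := by omega
    have hNk : k < N := by omega
    have key : ∀ n, N ≤ n → τ (q m) z + τ z (p' k) ≤ τ (q n) (p' n) := by
      intro n hn
      have h1 : 0 < τ (q n) (q m) := hqchain m n (by omega)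
      have h2 : 0 < τ (p' k) (p' n) := hpchain k n (by omega)
      have h3 : τ (q n) (q m) + τ (q m) z ≤ τ (q n) z := hrev _ _ _ h1 hm
      have h4 : 0 < τ (q n) z := (h1.trans_le le_self_add).trans_le h3
      have h5 : τ z (p' k) + τ (p' k) (p' n) ≤ τ z (p' n) := hrev _ _ _ hk h2
      have h6 : 0 < τ z (p' n) := (hk.trans_le le_self_add).trans_le h5
      have h7 : τ (q n) z + τ z (p' n) ≤ τ (q n) (p' n) := hrev _ _ _ h4 h6
      calc τ (q m) z + τ z (p' k)
          ≤ τ (q n) z + τ z (p' n) := by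
            gcongr
            · exact le_trans (le_add_self) h3
            · exact le_trans (le_add_right le_rfl) h5
        _ ≤ τ (q n) (p' n) := h7
    have hle : τ (q m) z + τ z (p' k) ≤ l :=
      ge_of_tendsto hl (eventually_atTop.mpr ⟨N, key⟩)
    exact ((hm.trans_le le_self_add).trans_le hle)
end

section
/- Reverse triangle inequality for the extended Lorentzian distance: let (qₙ), (q'ₙ) be past chains generating F, F' and (p'ₙ), (p''ₙ) future chains generating P', P''. Assume for each n that p'ₙ ≤ q'ₙ for a compatible causal relation ≤ (so that τ(qₙ,p''ₙ) ≥ τ(qₙ,p'ₙ) + τ(p'ₙ,q'ₙ) + τ(q'ₙ,p''ₙ) holds when the chronological relations hold), and assume F ∩ P' ≠ ∅ and F' ∩ P'' ≠ ∅. Then limₙ τ(qₙ,p''ₙ) ≥ limₙ τ(qₙ,p'ₙ) + limₙ τ(q'ₙ,p''ₙ). -/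
/-! Once the chains are far enough out, `qₙ ≤ p'ₙ` (through a point of `F ∩ P'`) and
`q'ₙ ≤ p''ₙ` (through a point of `F' ∩ P''`), so with `p'ₙ ≤ q'ₙ` the reverse triangle
inequality along `≤` applies to `qₙ ≤ p'ₙ ≤ q'ₙ ≤ p''ₙ`; dropping the middle term and
passing to the limit gives the claim. -/

open Filter Topology Set ENNReal

section

variable {X : Type*} {τ : X → X → ℝ≥0∞} {le : X → X → Prop}

theorem eventually_le_of_future_inter_past_nonempty
    (htrans : ∀ x y z, le x y → le y z → le x z) (hcont : ∀ x y, 0 < τ x y → le x y)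
    {q p : ℕ → X} (hq : ∀ n, 0 < τ (q (n + 1)) (q n)) (hp : ∀ n, 0 < τ (p n) (p (n + 1)))
    (hqp : ({z | ∃ n, 0 < τ (q n) z} ∩ {z | ∃ n, 0 < τ z (p n)}).Nonempty) :
    ∀ᶠ n in atTop, le (q n) (p n) := by
  have : IsTrans X le := ⟨htrans⟩
  obtain ⟨z, ⟨i, hqz⟩, ⟨j, hzp⟩⟩ := hqp
  filter_upwards [eventually_gt_atTop i, eventually_gt_atTop j] with n hin hjn
  have hqn : le (q n) (q i) :=
    Nat.rel_of_forall_rel_succ_of_lt (Function.swap le) (fun k => hcont _ _ (hq k)) hin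
  have hpn : le (p j) (p n) :=
    Nat.rel_of_forall_rel_succ_of_lt le (fun k => hcont _ _ (hp k)) hjn
  exact _root_.trans hqn (_root_.trans (hcont _ _ hqz) (_root_.trans (hcont _ _ hzp) hpn))

theorem add_le_of_causal_chain (htrans : ∀ x y z, le x y → le y z → le x z)
    (hrevle : ∀ x y z, le x y → le y z → τ x y + τ y z ≤ τ x z)
    {x y y' z : X} (hxy : le x y) (hyy' : le y y') (hy'z : le y' z) :
    τ x y + τ y' z ≤ τ x z :=
  calc τ x y + τ y' z ≤ τ x y' + τ y' z := by
        gcongr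
        exact le_add_right le_rfl |>.trans (hrevle _ _ _ hxy hyy')
    _ ≤ τ x z := hrevle _ _ _ (htrans _ _ _ hxy hyy') hy'z

end

theorem stmt10_general {X : Type*} (τ : X → X → ℝ≥0∞)
    (le : X → X → Prop)
    (htrans : ∀ x y z, le x y → le y z → le x z)
    (hcont : ∀ x y, 0 < τ x y → le x y)
    (hrevle : ∀ x y z, le x y → le y z → τ x y + τ y z ≤ τ x z)
    (q q' p' p'' : ℕ → X)
    (hq : ∀ n, 0 < τ (q (n + 1)) (q n)) (hq' : ∀ n, 0 < τ (q' (n + 1)) (q' n))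
    (hp' : ∀ n, 0 < τ (p' n) (p' (n + 1))) (hp'' : ∀ n, 0 < τ (p'' n) (p'' (n + 1)))
    (hmid : ∀ n, le (p' n) (q' n))
    (hFP' : ({z | ∃ n, 0 < τ (q n) z} ∩ {z | ∃ n, 0 < τ z (p' n)}).Nonempty)
    (hF'P'' : ({z | ∃ n, 0 < τ (q' n) z} ∩ {z | ∃ n, 0 < τ z (p'' n)}).Nonempty)
    (l₁ l₂ l₃ : ℝ≥0∞)
    (h₁ : Tendsto (fun n => τ (q n) (p'' n)) atTop (𝓝 l₁))
    (h₂ : Tendsto (fun n => τ (q n) (p' n)) atTop (𝓝 l₂))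
    (h₃ : Tendsto (fun n => τ (q' n) (p'' n)) atTop (𝓝 l₃)) :
    l₂ + l₃ ≤ l₁ := by
  refine le_of_tendsto_of_tendsto (h₂.add h₃) h₁ ?_
  filter_upwards [eventually_le_of_future_inter_past_nonempty htrans hcont hq hp' hFP',
    eventually_le_of_future_inter_past_nonempty htrans hcont hq' hp'' hF'P''] with n hqp' hq'p''
  exact add_le_of_causal_chain htrans hrevle hqp' (hmid n) hq'p''

theorem stmt10 {X : Type*} [TopologicalSpace X] (τ : X → X → ℝ≥0∞)
    (hlsc : LowerSemicontinuous fun p : X × X => τ p.1 p.2)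
    (hrev : ∀ x y z : X, 0 < τ x y → 0 < τ y z → τ x y + τ y z ≤ τ x z)
    (le : X → X → Prop) (hrefl : ∀ x, le x x)
    (htrans : ∀ x y z, le x y → le y z → le x z)
    (hcont : ∀ x y, 0 < τ x y → le x y)
    (hrevle : ∀ x y z, le x y → le y z → τ x y + τ y z ≤ τ x z)
    (q q' p' p'' : ℕ → X)
    (hq : ∀ n, 0 < τ (q (n + 1)) (q n)) (hq' : ∀ n, 0 < τ (q' (n + 1)) (q' n))
    (hp' : ∀ n, 0 < τ (p' n) (p' (n + 1))) (hp'' : ∀ n, 0 < τ (p'' n) (p'' (n + 1)))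
    (hmid : ∀ n, le (p' n) (q' n))
    (hFP' : ({z | ∃ n, 0 < τ (q n) z} ∩ {z | ∃ n, 0 < τ z (p' n)}).Nonempty)
    (hF'P'' : ({z | ∃ n, 0 < τ (q' n) z} ∩ {z | ∃ n, 0 < τ z (p'' n)}).Nonempty)
    (l₁ l₂ l₃ : ℝ≥0∞)
    (h₁ : Tendsto (fun n => τ (q n) (p'' n)) atTop (𝓝 l₁))
    (h₂ : Tendsto (fun n => τ (q n) (p' n)) atTop (𝓝 l₂))
    (h₃ : Tendsto (fun n => τ (q' n) (p'' n)) atTop (𝓝 l₃)) :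
    l₂ + l₃ ≤ l₁ :=
  stmt10_general τ le htrans hcont hrevle q q' p' p'' hq hq' hp' hp'' hmid hFP' hF'P'' l₁ l₂ l₃ h₁
    h₂ h₃
end

section
/- The extended distance restricts to the original one: let (X,σ,τ) be a Lorentzian metric space, q, p' ∈ X, (qₙ) a past chain with qₙ → q topologically and I⁺[(qₙ)] = I⁺(q), and (p'ₙ) a future chain with p'ₙ → p' topologically and I⁻[(p'ₙ)] = I⁻(p'). Then limₙ τ(qₙ,p'ₙ) = τ(q,p'). -/
open Filter Topology Set ENNReal

theorem stmt12 {X : Type*} [TopologicalSpace X] (τ : X → X → ℝ≥0∞)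
    (hlsc : LowerSemicontinuous fun p : X × X => τ p.1 p.2)
    (hrev : ∀ x y z : X, 0 < τ x y → 0 < τ y z → τ x y + τ y z ≤ τ x z)
    (q p' : X) (qc pc : ℕ → X)
    (hqc : ∀ n, 0 < τ (qc (n + 1)) (qc n))
    (hpc : ∀ n, 0 < τ (pc n) (pc (n + 1)))
    (hqlim : Tendsto qc atTop (𝓝 q))
    (hplim : Tendsto pc atTop (𝓝 p'))
    (hqgen : {z | ∃ n, 0 < τ (qc n) z} = {z | 0 < τ q z})
    (hpgen : {z | ∃ n, 0 < τ z (pc n)} = {z | 0 < τ z p'}) :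
    Tendsto (fun n => τ (qc n) (pc n)) atTop (𝓝 (τ q p')) := by
  have hub : ∀ n, τ (qc n) (pc n) ≤ τ q p' := by
    intro n
    by_cases h : 0 < τ (qc n) (pc n)
    · have hq : 0 < τ q (qc n) := by
        have : qc n ∈ {z | ∃ m, 0 < τ (qc m) z} := ⟨n + 1, hqc n⟩
        rw [hqgen] at this; exact this
      have hp : 0 < τ (pc n) p' := by
        have : pc n ∈ {z | ∃ m, 0 < τ z (pc m)} := ⟨n + 1, hpc n⟩
        rw [hpgen] at this; exact this
      have h1 : τ (qc n) (pc n) + τ (pc n) p' ≤ τ (qc n) p' := hrev _ _ _ h hp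
      have h2 : 0 < τ (qc n) p' := lt_of_lt_of_le (by exact lt_of_lt_of_le h le_self_add) h1
      have h3 : τ q (qc n) + τ (qc n) p' ≤ τ q p' := hrev _ _ _ hq h2
      calc τ (qc n) (pc n) ≤ τ (qc n) p' := le_trans le_self_add h1
        _ ≤ τ q p' := le_trans le_add_self h3
    · simp only [not_lt, le_zero_iff] at h
      simp [h]
  have htend : Tendsto (fun n => (qc n, pc n)) atTop (𝓝 (q, p')) :=
    hqlim.prodMk_nhds hplim
  have hlim : τ q p' ≤ liminf (fun n => τ (qc n) (pc n)) atTop := by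
    have := (hlsc.le_liminf (q, p'))
    calc τ q p' ≤ liminf (fun p : X × X => τ p.1 p.2) (𝓝 (q, p')) := this
      _ ≤ liminf (fun n => τ (qc n) (pc n)) atTop := by
          rw [show liminf (fun n => τ (qc n) (pc n)) atTop
              = liminf (fun p : X × X => τ p.1 p.2) (map (fun n => (qc n, pc n)) atTop) from
            (Filter.liminf_comp _ _ _).symm]
          exact liminf_le_liminf_of_le htend
  have hsup : limsup (fun n => τ (qc n) (pc n)) atTop ≤ τ q p' :=
    limsup_le_of_le (by isBoundedDefault) (Eventually.of_forall hub)
  exact tendsto_of_le_liminf_of_limsup_le hlim hsup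
end

section
/- Let (X,σ,τ) be a full, separable, chronologically dense Lorentzian metric space satisfying the S-property, with compatible causal relation ≤ satisfying push-up, and assume I±(x) are open for all x. Then for x, y ∈ X: (I⁻(x) ⊂ I⁻(y) and I⁺(y) ⊂ I⁺(x)) if and only if (y ∈ closure(J⁺(x)) and x ∈ closure(J⁻(y))). -/
open Filter Topology Set ENNReal

variable {X : Type*}

/-- The chronological past of a set: `I⁻[S]`. -/
def IPastSet (lt : X → X → Prop) (S : Set X) : Set X := {p | ∃ q ∈ S, lt p q}

/-- The chronological future of a set: `I⁺[S]`. -/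
def IFutSet (lt : X → X → Prop) (S : Set X) : Set X := {p | ∃ q ∈ S, lt q p}

/-- A past set: `P = I⁻[P]`. -/
def IsPastSet (lt : X → X → Prop) (P : Set X) : Prop := P = IPastSet lt P

/-- A future set: `F = I⁺[F]`. -/
def IsFutureSet (lt : X → X → Prop) (F : Set X) : Prop := F = IFutSet lt F

/-- An indecomposable past set (IP): a nonempty past set that is not the union of
two proper subsets which are past sets. -/
def IsIP (lt : X → X → Prop) (P : Set X) : Prop :=
  IsPastSet lt P ∧ P.Nonempty ∧
    ∀ P₁ P₂ : Set X, IsPastSet lt P₁ → IsPastSet lt P₂ → P₁ ⊂ P → P₂ ⊂ P → P ≠ P₁ ∪ P₂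

/-- An indecomposable future set (IF). -/
def IsIF (lt : X → X → Prop) (F : Set X) : Prop :=
  IsFutureSet lt F ∧ F.Nonempty ∧
    ∀ F₁ F₂ : Set X, IsFutureSet lt F₁ → IsFutureSet lt F₂ → F₁ ⊂ F → F₂ ⊂ F → F ≠ F₁ ∪ F₂

/-- The common past `↓S = I⁻[{p : p ≪ q, ∀ q ∈ S}]`. -/
def commonPast (lt : X → X → Prop) (S : Set X) : Set X :=
  IPastSet lt {p | ∀ q ∈ S, lt p q}

/-- The common future `↑S = I⁺[{p : q ≪ p, ∀ q ∈ S}]`. -/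
def commonFuture (lt : X → X → Prop) (S : Set X) : Set X :=
  IFutSet lt {p | ∀ q ∈ S, lt q p}

/-- `P ∼_S F`: `P` is a maximal IP contained in `↓F` and `F` is a maximal IF
contained in `↑P`. -/
def SRel (lt : X → X → Prop) (P F : Set X) : Prop :=
  IsIP lt P ∧ IsIF lt F ∧
    P ⊆ commonPast lt F ∧
    (∀ P' : Set X, IsIP lt P' → P' ⊆ commonPast lt F → P ⊆ P' → P' = P) ∧
    F ⊆ commonFuture lt P ∧
    (∀ F' : Set X, IsIF lt F' → F' ⊆ commonFuture lt P → F ⊆ F' → F' = F)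

/-- The S-property: `I⁻(x) ∼_S I⁺(x)` for every `x`, and there is no other IF
(resp. IP) S-related with `I⁻(x)` (resp. `I⁺(x)`). -/
def SProperty (lt : X → X → Prop) : Prop :=
  ∀ x : X, SRel lt {p | lt p x} {p | lt x p} ∧
    (∀ F : Set X, SRel lt {p | lt p x} F → F = {p | lt x p}) ∧
    (∀ P : Set X, SRel lt P {p | lt x p} → P = {p | lt p x})

lemma chain_lt_aux {X : Type*} (lt : X → X → Prop)
    (htr : ∀ {a b c : X}, lt a b → lt b c → lt a c)
    (c : ℕ → X) (hc : ∀ n, lt (c n) (c (n + 1))) :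
    ∀ n m, n < m → lt (c n) (c m) := by
  intro n m
  induction m with
  | zero => omega
  | succ k ih =>
    intro h
    rcases Nat.lt_succ_iff_lt_or_eq.mp h with h' | h'
    · exact htr (ih h') (hc k)
    · subst h'; exact hc n

lemma chain_below_aux {X : Type*} [TopologicalSpace X] (lt : X → X → Prop)
    (htr : ∀ {a b c : X}, lt a b → lt b c → lt a c)
    (hopenF : ∀ p : X, IsOpen {q | lt p q}) (hopenP : ∀ p : X, IsOpen {q | lt q p})
    (x : X) (hSx : SRel lt {p | lt p x} {p | lt x p})
    (c : ℕ → X) (hc : ∀ n, lt (c n) (c (n + 1))) (htend : Tendsto c atTop (𝓝 x)) :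
    ∀ n, lt (c n) x := by
  set P : Set X := {p | ∃ n, lt p (c n)} with hPdef
  have hmono : ∀ n m, n < m → lt (c n) (c m) := chain_lt_aux lt @htr c hc
  have hcP : ∀ n, c n ∈ P := fun n => ⟨n + 1, hc n⟩
  have hpast : IsPastSet lt P := by
    apply Set.eq_of_subset_of_subset
    · rintro p ⟨n, h⟩; exact ⟨c n, hcP n, h⟩
    · rintro p ⟨q, ⟨n, hq⟩, h⟩; exact ⟨n, htr h hq⟩
  have hIsub : {p | lt p x} ⊆ P := by
    intro p hp
    obtain ⟨m, hm⟩ := (htend.eventually ((hopenF p).mem_nhds hp)).exists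
    exact ⟨m, hm⟩
  have hcommon : P ⊆ commonPast lt {p | lt x p} := by
    rintro p ⟨n, hn⟩
    refine ⟨c (n + 1), ?_, htr hn (hc n)⟩
    intro r hr
    obtain ⟨m, hm, hlt⟩ :=
      ((htend.eventually ((hopenP r).mem_nhds hr)).and (eventually_gt_atTop (n + 1))).exists
    exact htr (hmono _ _ hlt) hm
  have hIP : IsIP lt P := by
    refine ⟨hpast, ⟨c 0, hcP 0⟩, ?_⟩
    intro P₁ P₂ h1 h2 hs1 hs2 heq
    obtain ⟨p, hpP, hpn1⟩ := exists_of_ssubset hs1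
    obtain ⟨n, hn⟩ := hpP
    have hnot1 : ∀ m, n ≤ m → c m ∉ P₁ := by
      intro m hm hcm
      apply hpn1
      have hpm : lt p (c m) := by
        rcases eq_or_lt_of_le hm with h | h
        · subst h; exact hn
        · exact htr hn (hmono n m h)
      rw [h1]; exact ⟨c m, hcm, hpm⟩
    have hP2 : P ⊆ P₂ := by
      rintro q ⟨k, hk⟩
      have hmem : c (max k n + 1) ∈ P₁ ∪ P₂ := heq ▸ hcP _
      have hm2 : c (max k n + 1) ∈ P₂ := by
        rcases hmem with h | h
        · exact absurd h (hnot1 _ (Nat.le_succ_of_le (Nat.le_max_right k n)))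
        · exact h
      rw [h2]
      exact ⟨_, hm2, htr hk (hmono k _ (Nat.lt_succ_of_le (Nat.le_max_left k n)))⟩
    exact hs2.not_subset hP2
  have hPeq : P = {p | lt p x} := hSx.2.2.2.1 P hIP hcommon hIsub
  intro n
  have h := hcP n
  rw [hPeq] at h
  exact h

lemma SRel_flip_aux {X : Type*} (lt : X → X → Prop) (P F : Set X) (h : SRel lt P F) :
    SRel (fun a b => lt b a) F P := by
  obtain ⟨a, b, c, d, e, f⟩ := h
  exact ⟨b, a, e, f, c, d⟩

lemma chain_above_aux {X : Type*} [TopologicalSpace X] (lt : X → X → Prop)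
    (htr : ∀ {a b c : X}, lt a b → lt b c → lt a c)
    (hopenF : ∀ p : X, IsOpen {q | lt p q}) (hopenP : ∀ p : X, IsOpen {q | lt q p})
    (x : X) (hSx : SRel lt {p | lt p x} {p | lt x p})
    (c : ℕ → X) (hc : ∀ n, lt (c (n + 1)) (c n)) (htend : Tendsto c atTop (𝓝 x)) :
    ∀ n, lt x (c n) :=
  chain_below_aux (fun a b => lt b a) (fun hab hbc => htr hbc hab) hopenP hopenF x
    (SRel_flip_aux lt _ _ hSx) c hc htend

theorem stmt15 {X : Type*} [t : TopologicalSpace X] (τ : X → X → ℝ≥0∞)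
    (hlsc : LowerSemicontinuous fun p : X × X => τ p.1 p.2)
    (hrev : ∀ x y z : X, 0 < τ x y → 0 < τ y z → τ x y + τ y z ≤ τ x z)
    -- compatible causal relation with push-up
    (le : X → X → Prop) (hrefl : ∀ x, le x x)
    (htrans : ∀ x y z, le x y → le y z → le x z)
    (hcont : ∀ x y, 0 < τ x y → le x y)
    (hrevle : ∀ x y z, le x y → le y z → τ x y + τ y z ≤ τ x z)
    (hpush : ∀ x y z : X, ((le x y ∧ 0 < τ y z) ∨ (0 < τ x y ∧ le y z)) → 0 < τ x z)
    -- full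
    (hfull : ∀ x : X, {p | 0 < τ p x}.Nonempty ∧ {p | 0 < τ x p}.Nonempty)
    -- separable
    (hsep : ∃ S : Set X, S.Countable ∧
      ∀ x y : X, 0 < τ x y → ∃ s ∈ S, 0 < τ x s ∧ 0 < τ s y)
    -- chronologically dense
    (hdense : ∀ x : X,
      ({p | 0 < τ p x}.Nonempty →
        ∃ c : ℕ → X, (∀ n, 0 < τ (c n) (c (n + 1))) ∧ Tendsto c atTop (𝓝 x)) ∧
      ({p | 0 < τ x p}.Nonempty →
        ∃ c : ℕ → X, (∀ n, 0 < τ (c (n + 1)) (c n)) ∧ Tendsto c atTop (𝓝 x)))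
    -- S-property
    (hS : SProperty (fun x y : X => 0 < τ x y))
    -- the chronological futures and pasts are open
    (hopen : ∀ x : X, IsOpen {p | 0 < τ x p} ∧ IsOpen {p | 0 < τ p x}) :
    ∀ x y : X,
      ({p | 0 < τ p x} ⊆ {p | 0 < τ p y} ∧ {p | 0 < τ y p} ⊆ {p | 0 < τ x p}) ↔
      (y ∈ closure {z | le x z} ∧ x ∈ closure {z | le z y}) := by
  have htr : ∀ {a b c : X}, 0 < τ a b → 0 < τ b c → 0 < τ a c := fun hab hbc =>
    lt_of_lt_of_le (lt_of_lt_of_le hab le_self_add) (hrev _ _ _ hab hbc)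
  intro x y
  constructor
  · rintro ⟨hpast, hfut⟩
    constructor
    · obtain ⟨d, hd, hdt⟩ := (hdense y).2 (hfull y).2
      have hchain := chain_above_aux (fun a b => 0 < τ a b) @htr
        (fun p => (hopen p).1) (fun p => (hopen p).2) y (hS y).1 d hd hdt
      exact mem_closure_of_tendsto hdt
        (Eventually.of_forall fun n => hcont _ _ (hfut (hchain n)))
    · obtain ⟨c, hc, hct⟩ := (hdense x).1 (hfull x).1
      have hchain := chain_below_aux (fun a b => 0 < τ a b) @htr
        (fun p => (hopen p).1) (fun p => (hopen p).2) x (hS x).1 c hc hct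
      exact mem_closure_of_tendsto hct
        (Eventually.of_forall fun n => hcont _ _ (hpast (hchain n)))
  · rintro ⟨hy, hx⟩
    constructor
    · intro p hp
      obtain ⟨z, hz1, hz2⟩ := mem_closure_iff.mp hx _ (hopen p).1 hp
      exact hpush p z y (Or.inr ⟨hz1, hz2⟩)
    · intro p hp
      obtain ⟨z, hz1, hz2⟩ := mem_closure_iff.mp hy _ (hopen p).2 hp
      exact hpush x z p (Or.inl ⟨hz2, hz1⟩)
end
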